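/- arXiv:1312.4778 — 4 statements merged into one kernel-verified Lean document; each statement's English description precedes it below -/
import Mathlib

section
/- Let n ≥ 3 and r > r_crit. Then the equation z^(n−1)/(z^n − r^n) = conj(z) has exactly n+1 complex solutions: z = 0 and r₃ e^{i·2kπ/n}, k = 0,…,n−1, where r₃ > 1 is the unique positive root of ρ^n − ρ^(n−2) − r^n. -/
/-! Multiplying the equation by `z ≠ 0` turns it into `(|z|² - 1) z ^ n = |z|² r ^ n`.
Taking moduli, `|z| ^ (n - 2) * | |z|² - 1 | = r ^ n`. For `|z| ≤ 1` the left side is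
`|z| ^ (n - 2) - |z| ^ n`, which by weighted AM-GM is at most `r_crit ^ n < r ^ n`; hence
`|z| > 1`, `|z|` is the unique root `r₃` of `ρ ^ n - ρ ^ (n - 2) = r ^ n`, and then
`z ^ n = r₃ ^ n`. Conversely every `z` with `z ^ n = r₃ ^ n` solves the equation. -/

open Complex

open scoped ComplexConjugate Real

theorem pow_eq_pow_sub_two_mul_sq {M : Type*} [Monoid M] {n : ℕ} (hn : 2 ≤ n) (x : M) :
    x ^ n = x ^ (n - 2) * x ^ 2 := by
  rw [← pow_add, Nat.sub_add_cancel hn]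

theorem pow_sub_pow_sub_two {R : Type*} [CommRing R] {n : ℕ} (hn : 2 ≤ n) (x : R) :
    x ^ n - x ^ (n - 2) = x ^ (n - 2) * (x ^ 2 - 1) := by
  rw [pow_eq_pow_sub_two_mul_sq hn]
  ring

theorem Real.rpow_mul_rpow_le_of_add_eq_one {a b u v : ℝ} (ha : 0 < a) (hb : 0 < b)
    (hab : a + b = 1) (hu : 0 ≤ u) (hv : 0 ≤ v) (huv : u + v = 1) :
    u ^ a * v ^ b ≤ a ^ a * b ^ b := by
  have hamgm : (u / a) ^ a * (v / b) ^ b ≤ a * (u / a) + b * (v / b) :=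
    Real.geom_mean_le_arith_mean2_weighted ha.le hb.le (by positivity) (by positivity) hab
  rw [mul_div_cancel₀ _ ha.ne', mul_div_cancel₀ _ hb.ne', huv,
    Real.div_rpow hu ha.le, Real.div_rpow hv hb.le, div_mul_div_comm,
    div_le_one (by positivity)] at hamgm
  exact hamgm

/-- `critBound n = r_crit ^ n`, the maximum of `ρ ^ (n - 2) - ρ ^ n` on `[0, 1]`,
attained at `ρ ^ 2 = (n - 2) / n`. -/
noncomputable def critBound (n : ℕ) : ℝ :=
  (((n : ℝ) - 2) / n) ^ (((n : ℝ) - 2) / 2) - (((n : ℝ) - 2) / n) ^ ((n : ℝ) / 2)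

theorem pow_sub_two_sub_pow_le_critBound {n : ℕ} (hn : 3 ≤ n) {ρ : ℝ} (hρ₀ : 0 ≤ ρ)
    (hρ₁ : ρ ≤ 1) : ρ ^ (n - 2) - ρ ^ n ≤ critBound n := by
  have hn' : (3 : ℝ) ≤ n := by exact_mod_cast hn
  set a : ℝ := ((n : ℝ) - 2) / n with ha_def
  have ha : 0 < a := div_pos (by linarith) (by linarith)
  have hb : 0 < 1 - a := by rw [ha_def, sub_pos, div_lt_one (by linarith)]; linarith
  have hu : 0 ≤ ρ ^ 2 := by positivity
  have hv : 0 ≤ 1 - ρ ^ 2 := by nlinarith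
  -- AM-GM with weights `a, 1 - a` at `ρ ^ 2, 1 - ρ ^ 2`, raised to the power `n / 2`
  have key := Real.rpow_le_rpow (by positivity)
    (Real.rpow_mul_rpow_le_of_add_eq_one ha hb (add_sub_cancel a 1) hu hv (add_sub_cancel _ 1))
    (by positivity : (0 : ℝ) ≤ n / 2)
  have hexp₁ : a * (n / 2) = ((n : ℝ) - 2) / 2 := by rw [ha_def]; field_simp
  have hexp₂ : (1 - a) * (n / 2) = 1 := by rw [ha_def]; field_simp; ring
  rw [Real.mul_rpow (by positivity) (by positivity), Real.mul_rpow (by positivity) (by positivity),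
    ← Real.rpow_mul hu, ← Real.rpow_mul hv, ← Real.rpow_mul ha.le, ← Real.rpow_mul hb.le,
    hexp₁, hexp₂, Real.rpow_one, Real.rpow_one] at key
  have hpow : (ρ ^ 2) ^ (((n : ℝ) - 2) / 2) = ρ ^ (n - 2) := by
    rw [← Real.rpow_natCast, ← Real.rpow_mul hρ₀, ← Real.rpow_natCast]
    push_cast [Nat.cast_sub (by omega : 2 ≤ n)]
    ring_nf
  have hcrit : a ^ (((n : ℝ) - 2) / 2) * (1 - a) = critBound n := by
    rw [critBound, ← ha_def, show (n : ℝ) / 2 = ((n : ℝ) - 2) / 2 + 1 by ring,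
      Real.rpow_add ha, Real.rpow_one]
    ring
  rw [hpow, hcrit] at key
  linarith [pow_eq_pow_sub_two_mul_sq (n := n) (by omega) ρ]

theorem critBound_nonneg {n : ℕ} (hn : 3 ≤ n) : 0 ≤ critBound n := by
  simpa [zero_pow (by omega : n - 2 ≠ 0), zero_pow (by omega : n ≠ 0)] using
    pow_sub_two_sub_pow_le_critBound hn le_rfl zero_le_one

theorem Real.lt_pow_of_rpow_one_div_lt {x r : ℝ} {n : ℕ} (hx : 0 ≤ x) (hn : n ≠ 0)
    (h : x ^ (1 / n : ℝ) < r) : x < r ^ n := by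
  have hr : 0 ≤ r := (Real.rpow_nonneg hx _).trans h.le
  rwa [one_div, Real.rpow_inv_lt_iff_of_pos hx hr (by positivity), Real.rpow_natCast] at h

theorem strictMonoOn_pow_sub_pow_sub_two {n : ℕ} (hn : 2 ≤ n) :
    StrictMonoOn (fun ρ : ℝ => ρ ^ n - ρ ^ (n - 2)) (Set.Ici 1) := by
  intro a ha b _ hab
  simp only [Set.mem_Ici] at ha
  simp only [pow_sub_pow_sub_two hn]
  have hsq : a ^ 2 - 1 < b ^ 2 - 1 := by nlinarith
  calc a ^ (n - 2) * (a ^ 2 - 1) ≤ b ^ (n - 2) * (a ^ 2 - 1) := by gcongr; nlinarith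
    _ < b ^ (n - 2) * (b ^ 2 - 1) := by gcongr; exact pow_pos (by linarith) _

theorem one_lt_of_pow_sub_pow_sub_two_pos {n : ℕ} (hn : 2 ≤ n) {ρ : ℝ} (hρ : 0 ≤ ρ)
    (h : 0 < ρ ^ n - ρ ^ (n - 2)) : 1 < ρ := by
  by_contra! hρ₁
  rw [pow_sub_pow_sub_two hn] at h
  exact h.not_ge (mul_nonpos_of_nonneg_of_nonpos (pow_nonneg hρ _) (by nlinarith))

theorem exists_pow_sub_pow_sub_two_eq {n : ℕ} (hn : 2 ≤ n) {c : ℝ} (hc : 0 < c) :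
    ∃ ρ : ℝ, 1 < ρ ∧ ρ ^ n - ρ ^ (n - 2) = c ∧
      ∀ σ : ℝ, 0 ≤ σ → σ ^ n - σ ^ (n - 2) = c → σ = ρ := by
  set f : ℝ → ℝ := fun ρ => ρ ^ n - ρ ^ (n - 2)
  have hf₁ : f 1 = 0 := by simp [f]
  have hfc : c ≤ f (c + 1) := by
    simp only [f, pow_sub_pow_sub_two hn]
    calc c ≤ 1 * ((c + 1) ^ 2 - 1) := by nlinarith
      _ ≤ (c + 1) ^ (n - 2) * ((c + 1) ^ 2 - 1) := by
        gcongr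
        · nlinarith
        · exact one_le_pow₀ (by linarith)
  obtain ⟨ρ, hρ, hfρ : ρ ^ n - ρ ^ (n - 2) = c⟩ :=
    intermediate_value_Icc (by linarith) (by fun_prop : Continuous f).continuousOn
      ⟨hf₁ ▸ hc.le, hfc⟩
  have hρ₁ : 1 < ρ := one_lt_of_pow_sub_pow_sub_two_pos hn (by linarith [hρ.1]) (hfρ ▸ hc)
  refine ⟨ρ, hρ₁, hfρ, fun σ hσ hfσ => ?_⟩
  have hσ₁ := one_lt_of_pow_sub_pow_sub_two_pos hn hσ (hfσ ▸ hc)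
  exact (strictMonoOn_pow_sub_pow_sub_two hn).injOn (Set.mem_Ici.2 hσ₁.le)
    (Set.mem_Ici.2 hρ₁.le) (hfσ.trans hfρ.symm)

theorem Complex.div_pow_sub_eq_conj_iff {n : ℕ} (hn : n ≠ 0) {z w : ℂ} (hz : z ≠ 0)
    (hw : w ≠ 0) :
    (z ^ n ≠ w ∧ z ^ (n - 1) / (z ^ n - w) = conj z) ↔
      ((‖z‖ : ℂ) ^ 2 - 1) * z ^ n = (‖z‖ : ℂ) ^ 2 * w := by
  have hzn : z ^ (n - 1) * z = z ^ n := by rw [← pow_succ, Nat.sub_add_cancel (by omega)]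
  constructor
  · rintro ⟨hzw, hsol⟩
    rw [div_eq_iff (sub_ne_zero.2 hzw)] at hsol
    linear_combination hzn - z * hsol - (z ^ n - w) * mul_conj' z
  · intro h
    have hzw : z ^ n ≠ w := by
      rintro rfl
      exact hw (by linear_combination -h)
    refine ⟨hzw, (div_eq_iff (sub_ne_zero.2 hzw)).2 (mul_left_cancel₀ hz ?_)⟩
    linear_combination hzn - h - (z ^ n - w) * mul_conj' z

theorem Complex.norm_eq_of_sq_norm_sub_one_mul_pow_eq {n : ℕ} (hn : 3 ≤ n) {c ρ : ℝ}
    (hc : critBound n < c) (hρ : 1 < ρ) (hρc : ρ ^ n - ρ ^ (n - 2) = c) {z : ℂ} (hz : z ≠ 0)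
    (h : ((‖z‖ : ℂ) ^ 2 - 1) * z ^ n = (‖z‖ : ℂ) ^ 2 * c) : ‖z‖ = ρ := by
  set s := ‖z‖ with hs
  have hs₀ : 0 < s := norm_pos_iff.2 hz
  have hc₀ : 0 < c := by
    rw [← hρc, pow_sub_pow_sub_two (by omega)]
    exact mul_pos (pow_pos (by linarith) _) (by nlinarith)
  rw [show (s : ℂ) ^ 2 - 1 = ((s ^ 2 - 1 : ℝ) : ℂ) by push_cast; rfl] at h
  have hnorm := congrArg norm h
  simp only [norm_mul, norm_pow, Complex.norm_real, Real.norm_eq_abs, abs_of_pos hc₀,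
    abs_of_pos hs₀, ← hs] at hnorm
  have habs : |s ^ 2 - 1| * s ^ (n - 2) = c := by
    apply mul_right_cancel₀ (pow_pos hs₀ 2).ne'
    linear_combination hnorm - |s ^ 2 - 1| * pow_eq_pow_sub_two_mul_sq (n := n) (by omega) s
  rcases le_or_gt s 1 with hs₁ | hs₁
  · rw [abs_of_nonpos (by nlinarith)] at habs
    have := pow_sub_two_sub_pow_le_critBound hn hs₀.le hs₁
    exfalso
    linarith [pow_eq_pow_sub_two_mul_sq (n := n) (by omega) s]
  · rw [abs_of_pos (by nlinarith)] at habs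
    refine (strictMonoOn_pow_sub_pow_sub_two (by omega : 2 ≤ n)).injOn (Set.mem_Ici.2 hs₁.le)
      (Set.mem_Ici.2 hρ.le) ?_
    show s ^ n - s ^ (n - 2) = ρ ^ n - ρ ^ (n - 2)
    rw [hρc, pow_sub_pow_sub_two (by omega : 2 ≤ n)]
    linarith

theorem Complex.sq_norm_sub_one_mul_pow_eq_iff {n : ℕ} (hn : 3 ≤ n) {c ρ : ℝ}
    (hc : critBound n < c) (hρ : 1 < ρ) (hρc : ρ ^ n - ρ ^ (n - 2) = c) {z : ℂ} (hz : z ≠ 0) :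
    ((‖z‖ : ℂ) ^ 2 - 1) * z ^ n = (‖z‖ : ℂ) ^ 2 * c ↔ z ^ n = (ρ : ℂ) ^ n := by
  have hcρ : ρ ^ 2 * c = (ρ ^ 2 - 1) * ρ ^ n := by
    rw [← hρc, pow_eq_pow_sub_two_mul_sq (by omega : 2 ≤ n)]
    ring
  constructor
  · intro h
    rw [norm_eq_of_sq_norm_sub_one_mul_pow_eq hn hc hρ hρc hz h] at h
    have hρ₂ : (ρ : ℂ) ^ 2 - 1 ≠ 0 := by exact_mod_cast (by nlinarith : ρ ^ 2 - 1 ≠ 0)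
    refine mul_left_cancel₀ hρ₂ (h.trans ?_)
    exact_mod_cast hcρ
  · intro h
    have hnorm : ‖z‖ = ρ := by
      refine (pow_left_inj₀ (norm_nonneg z) (by linarith) (by omega : n ≠ 0)).1 ?_
      simpa [abs_of_pos (by linarith : 0 < ρ)] using congrArg norm h
    rw [hnorm, h]
    exact_mod_cast hcρ.symm

theorem Complex.exp_two_mul_nat_mul_pi_div_mul_I (k n : ℕ) :
    exp (((2 * (k : ℝ) * π / n : ℝ) : ℂ) * I) = exp (2 * π * I / n) ^ k := by
  rw [← exp_nat_mul]
  push_cast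
  ring_nf

theorem Complex.pow_eq_pow_iff_exists_eq_mul_exp {n : ℕ} (hn : n ≠ 0) {c z : ℂ} (hc : c ≠ 0) :
    z ^ n = c ^ n ↔ ∃ k < n, z = c * exp (((2 * (k : ℝ) * π / n : ℝ) : ℂ) * I) := by
  have hζ := isPrimitiveRoot_exp n hn
  have : NeZero n := ⟨hn⟩
  simp only [exp_two_mul_nat_mul_pi_div_mul_I]
  constructor
  · intro h
    obtain ⟨k, hk, hζk⟩ := hζ.eq_pow_of_pow_eq_one (ξ := z / c)
      (by rw [div_pow, h, div_self (pow_ne_zero n hc)])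
    exact ⟨k, hk, by rw [hζk, mul_div_cancel₀ z hc]⟩
  · rintro ⟨k, -, rfl⟩
    rw [mul_pow, pow_right_comm, hζ.pow_eq_one, one_pow, mul_one]

theorem Complex.ncard_zero_union_setOf_exists_eq_mul_exp {n : ℕ} (hn : n ≠ 0) {c : ℂ}
    (hc : c ≠ 0) :
    ({0} ∪ {z : ℂ | ∃ k < n, z = c * exp (((2 * (k : ℝ) * π / n : ℝ) : ℂ) * I)}).ncard =
      n + 1 := by
  have hζ := isPrimitiveRoot_exp n hn
  have himage : {z : ℂ | ∃ k < n, z = c * exp (((2 * (k : ℝ) * π / n : ℝ) : ℂ) * I)} =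
      (fun k : ℕ => c * exp (2 * π * I / n) ^ k) '' Set.Iio n := by
    simp_rw [exp_two_mul_nat_mul_pi_div_mul_I]
    ext z
    simp [eq_comm]
  have hzero : (0 : ℂ) ∉ (fun k : ℕ => c * exp (2 * π * I / n) ^ k) '' Set.Iio n := by
    rintro ⟨k, -, hk⟩
    exact mul_ne_zero hc (pow_ne_zero _ (exp_ne_zero _)) hk
  rw [himage, Set.singleton_union, Set.ncard_insert_of_notMem hzero ((Set.finite_Iio n).image _),
    Set.InjOn.ncard_image (s := Set.Iio n) fun a ha b hb hab =>
      hζ.pow_inj ha hb (mul_left_cancel₀ hc hab),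
    Set.ncard_Iio_nat]

/-- For `n ≥ 3` and `r > r_crit`, the equation `z^(n−1)/(z^n − r^n) = conj z`
has exactly `n+1` solutions: `z = 0` and `n` points on a circle of radius `r₃ > 1`,
where `r₃` is the unique positive root of `ρ^n − ρ^(n−2) − r^n`. -/
theorem stmt_5 (n : ℕ) (hn : 3 ≤ n) (r : ℝ)
    (hrc : r > ((((n : ℝ) - 2) / n) ^ (((n : ℝ) - 2) / 2) -
          (((n : ℝ) - 2) / n) ^ ((n : ℝ) / 2)) ^ ((1 : ℝ) / n)) :
    {z : ℂ | z ^ n ≠ (r : ℂ) ^ n ∧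
        z ^ (n - 1) / (z ^ n - (r : ℂ) ^ n) = (starRingEnd ℂ) z}.ncard = n + 1 ∧
    ∃ r₃ : ℝ, 1 < r₃ ∧
      (0 < r₃ ∧ r₃ ^ n - r₃ ^ (n - 2) - r ^ n = 0 ∧
        ∀ ρ : ℝ, 0 < ρ → ρ ^ n - ρ ^ (n - 2) - r ^ n = 0 → ρ = r₃) ∧
      {z : ℂ | z ^ n ≠ (r : ℂ) ^ n ∧
          z ^ (n - 1) / (z ^ n - (r : ℂ) ^ n) = (starRingEnd ℂ) z} =
        {0} ∪
        {z : ℂ | ∃ k < n, z = (r₃ : ℂ) *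
          Complex.exp (((2 * (k : ℝ) * Real.pi / n : ℝ) : ℂ) * Complex.I)} := by
  have hX : critBound n < r ^ n :=
    Real.lt_pow_of_rpow_one_div_lt (critBound_nonneg hn) (by omega) hrc
  have hr : 0 < r := (Real.rpow_nonneg (critBound_nonneg hn) _).trans_lt hrc
  obtain ⟨r₃, hr₃, hr₃r, hr₃_unique⟩ :=
    exists_pow_sub_pow_sub_two_eq (n := n) (by omega) (pow_pos hr n)
  have hr₃C : (r₃ : ℂ) ≠ 0 := ofReal_ne_zero.2 (by linarith)
  have hrn : (r : ℂ) ^ n ≠ 0 := pow_ne_zero n (ofReal_ne_zero.2 hr.ne')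
  have hsol : {z : ℂ | z ^ n ≠ (r : ℂ) ^ n ∧
        z ^ (n - 1) / (z ^ n - (r : ℂ) ^ n) = conj z} =
      {0} ∪ {z : ℂ | ∃ k < n, z = (r₃ : ℂ) *
          Complex.exp (((2 * (k : ℝ) * Real.pi / n : ℝ) : ℂ) * Complex.I)} := by
    ext z
    rw [Set.mem_union, Set.mem_singleton_iff, Set.mem_ofPred_eq, Set.mem_ofPred_eq,
      ← pow_eq_pow_iff_exists_eq_mul_exp (by omega) hr₃C]
    rcases eq_or_ne z 0 with rfl | hz
    · simp [zero_pow (by omega : n ≠ 0), zero_pow (by omega : n - 1 ≠ 0), hrn.symm]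
    · rw [div_pow_sub_eq_conj_iff (by omega) hz hrn, ← ofReal_pow r n,
        sq_norm_sub_one_mul_pow_eq_iff hn hX hr₃ hr₃r hz]
      simp [hz]
  refine ⟨?_, r₃, hr₃,
    ⟨by linarith, by linarith, fun ρ hρ h => hr₃_unique ρ hρ.le (by linarith)⟩, hsol⟩
  rw [hsol]
  exact ncard_zero_union_setOf_exists_eq_mul_exp (by omega) hr₃C
end

section
/- Let n ≥ 3, 0 < r < r_crit, and ε* as above. If ε* < ε < 1, then the equation (z^n − ε r^n)/(z(z^n − r^n)) = conj(z) has exactly 3n complex solutions. -/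
/-!
Put `s = r ^ n`. Clearing denominators and using `conj z * z = ‖z‖ ^ 2`, the equation becomes
`z ^ n * (1 - ‖z‖ ^ 2) = s * (ε - ‖z‖ ^ 2)`, so `z ^ n` is real, hence equal to `±‖z‖ ^ n`, and the
modulus is a positive root of `radialPoly n (∓ s) (± ε * s)`, whose derivative is
`x * critPoly n (∓ 2 * s) x`. Since `critPoly` decreases and then increases on `[0, ∞)`,
`radialPoly n (-s) (ε * s)` decreases and then increases, so it has exactly two positive roots.
`radialPoly n s (-(ε * s))` increases up to its first critical point `ξ₁`, decreases up to the
next one and increases afterwards; `ε > ε*` says exactly that it is negative at `ξ₁`, so it has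
exactly one positive root. The three resulting values of `z ^ n` are distinct and nonzero, and
each has `n` distinct `n`-th roots.
-/

open Complex ComplexConjugate Polynomial Set

theorem exists_zero_of_valley {f : ℝ → ℝ} {a b d : ℝ} (hf : ContinuousOn f (Icc b d))
    (hanti : StrictAntiOn f (Icc a b)) (hmono : StrictMonoOn f (Ici b)) (hab : a ≤ b)
    (hbd : b ≤ d) (ha : f a ≤ 0) (hd : 0 < f d) :
    ∃ c ∈ Ico b d, f c = 0 ∧ (∀ x ∈ Ioo a c, f x < 0) ∧ ∀ x, c < x → 0 < f x := by
  have hb : f b ≤ 0 := (hanti.antitoneOn ⟨le_rfl, hab⟩ ⟨hab, le_rfl⟩ hab).trans ha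
  obtain ⟨c, hc, hfc⟩ := intermediate_value_Icc hbd hf ⟨hb, hd.le⟩
  have hcd : c < d := hc.2.lt_of_ne (by rintro rfl; linarith)
  refine ⟨c, ⟨hc.1, hcd⟩, hfc, fun x hx => ?_, fun x hx => ?_⟩
  · rcases le_or_gt x b with hxb | hxb
    · exact (hanti ⟨le_rfl, hab⟩ ⟨hx.1.le, hxb⟩ hx.1).trans_le ha
    · exact hfc ▸ hmono (le_of_lt hxb) hc.1 hx.2
  · exact hfc ▸ hmono hc.1 (hc.1.trans hx.le) hx

theorem pos_of_lt_least_pos_root {f : ℝ → ℝ} {ξ x : ℝ} (hf : Continuous f) (h0 : 0 < f 0)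
    (hmin : ∀ y, 0 < y → f y = 0 → ξ ≤ y) (hx : x ∈ Ico 0 ξ) : 0 < f x := by
  by_contra! hfx
  obtain ⟨y, hy, hfy⟩ := intermediate_value_Icc' hx.1 hf.continuousOn ⟨hfx, h0.le⟩
  have hy0 : 0 < y := hy.1.lt_of_ne (by rintro rfl; linarith)
  linarith [hmin y hy0 hfy, hy.2, hx.2]

def critPoly (n : ℕ) (c x : ℝ) : ℝ := ((n : ℝ) + 2) * x ^ n - (n : ℝ) * x ^ (n - 2) + c

def radialPoly (n : ℕ) (a b x : ℝ) : ℝ := x ^ (n + 2) - x ^ n + a * x ^ 2 + b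

section

variable {n : ℕ} {a b c x : ℝ}

theorem critPoly_zero (hn : 3 ≤ n) : critPoly n c 0 = c := by
  simp [critPoly, show n ≠ 0 by omega, show n - 2 ≠ 0 by omega]

theorem radialPoly_zero (hn : n ≠ 0) : radialPoly n a b 0 = b := by
  simp [radialPoly, hn]

theorem radialPoly_one : radialPoly n a b 1 = a + b := by
  simp [radialPoly]

theorem continuous_critPoly : Continuous (critPoly n c) := by
  unfold critPoly; fun_prop

theorem continuous_radialPoly : Continuous (radialPoly n a b) := by
  unfold radialPoly; fun_prop

theorem hasDerivAt_critPoly (hn : 3 ≤ n) (x : ℝ) :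
    HasDerivAt (critPoly n c)
      (n * x ^ (n - 3) * (((n : ℝ) + 2) * x ^ 2 - ((n : ℝ) - 2))) x := by
  obtain ⟨m, rfl⟩ : ∃ m, n = m + 3 := ⟨n - 3, by omega⟩
  have h := (((hasDerivAt_pow (m + 3) x).const_mul ((↑(m + 3) : ℝ) + 2)).sub
    ((hasDerivAt_pow (m + 1) x).const_mul (↑(m + 3) : ℝ))).add_const c
  refine h.congr_deriv ?_
  simp only [show m + 3 - 3 = m by omega, show m + 3 - 1 = m + 2 by omega, Nat.add_sub_cancel]
  push_cast; ring

theorem hasDerivAt_radialPoly (hn : 2 ≤ n) (x : ℝ) :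
    HasDerivAt (radialPoly n a b) (x * critPoly n (2 * a) x) x := by
  obtain ⟨k, rfl⟩ : ∃ k, n = k + 2 := ⟨n - 2, by omega⟩
  have h := ((((hasDerivAt_pow (k + 4) x).sub (hasDerivAt_pow (k + 2) x)).add
    ((hasDerivAt_pow 2 x).const_mul a)).add_const b)
  refine h.congr_deriv ?_
  simp only [critPoly, show k + 4 - 1 = k + 3 by omega, show k + 2 - 1 = k + 1 by omega,
    Nat.add_sub_cancel]
  push_cast; ring

theorem monotoneOn_radialPoly (hn : 2 ≤ n) {S : Set ℝ} (hS : Convex ℝ S)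
    (h : ∀ x ∈ interior S, 0 ≤ x * critPoly n (2 * a) x) : MonotoneOn (radialPoly n a b) S :=
  monotoneOn_of_deriv_nonneg hS continuous_radialPoly.continuousOn
    (fun x _ => (hasDerivAt_radialPoly hn x).differentiableAt.differentiableWithinAt)
    (fun x hx => (hasDerivAt_radialPoly hn x).deriv ▸ h x hx)

theorem antitoneOn_radialPoly (hn : 2 ≤ n) {S : Set ℝ} (hS : Convex ℝ S)
    (h : ∀ x ∈ interior S, x * critPoly n (2 * a) x ≤ 0) : AntitoneOn (radialPoly n a b) S :=
  antitoneOn_of_deriv_nonpos hS continuous_radialPoly.continuousOn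
    (fun x _ => (hasDerivAt_radialPoly hn x).differentiableAt.differentiableWithinAt)
    (fun x hx => (hasDerivAt_radialPoly hn x).deriv ▸ h x hx)

theorem strictMonoOn_radialPoly (hn : 2 ≤ n) {S : Set ℝ} (hS : Convex ℝ S)
    (h : ∀ x ∈ interior S, 0 < x * critPoly n (2 * a) x) : StrictMonoOn (radialPoly n a b) S :=
  strictMonoOn_of_deriv_pos hS continuous_radialPoly.continuousOn
    (fun x hx => (hasDerivAt_radialPoly hn x).deriv ▸ h x hx)

theorem strictAntiOn_radialPoly (hn : 2 ≤ n) {S : Set ℝ} (hS : Convex ℝ S)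
    (h : ∀ x ∈ interior S, x * critPoly n (2 * a) x < 0) : StrictAntiOn (radialPoly n a b) S :=
  strictAntiOn_of_deriv_neg hS continuous_radialPoly.continuousOn
    (fun x hx => (hasDerivAt_radialPoly hn x).deriv ▸ h x hx)

theorem exists_valley_critPoly (hn : 3 ≤ n) (c : ℝ) :
    ∃ β, 0 < β ∧ β < 1 ∧ StrictAntiOn (critPoly n c) (Icc 0 β) ∧
      StrictMonoOn (critPoly n c) (Ici β) := by
  have hn' : (3 : ℝ) ≤ n := by exact_mod_cast hn
  set β := Real.sqrt (((n : ℝ) - 2) / ((n : ℝ) + 2))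
  have hβ0 : 0 < β := Real.sqrt_pos.2 (div_pos (by linarith) (by linarith))
  have hβ2 : ((n : ℝ) + 2) * β ^ 2 = (n : ℝ) - 2 := by
    rw [Real.sq_sqrt (div_pos (by linarith) (by linarith)).le]; field_simp
  have hβ1 : β < 1 := by
    by_contra! h
    nlinarith [one_le_pow₀ (n := 2) h]
  have hderiv (x : ℝ) := (hasDerivAt_critPoly (c := c) hn x).deriv
  refine ⟨β, hβ0, hβ1, ?_, ?_⟩
  · refine strictAntiOn_of_deriv_neg (convex_Icc 0 β) continuous_critPoly.continuousOn
      fun x hx => ?_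
    rw [interior_Icc] at hx
    rw [hderiv]
    have : ((n : ℝ) + 2) * x ^ 2 < (n : ℝ) - 2 :=
      hβ2 ▸ mul_lt_mul_of_pos_left (pow_lt_pow_left₀ hx.2 hx.1.le two_ne_zero) (by linarith)
    exact mul_neg_of_pos_of_neg (by have := hx.1; positivity) (by linarith)
  · refine strictMonoOn_of_deriv_pos (convex_Ici β) continuous_critPoly.continuousOn
      fun x hx => ?_
    rw [interior_Ici] at hx
    rw [hderiv]
    have hx0 : 0 < x := hβ0.trans hx
    have : (n : ℝ) - 2 < ((n : ℝ) + 2) * x ^ 2 :=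
      hβ2 ▸ mul_lt_mul_of_pos_left (pow_lt_pow_left₀ hx hβ0.le two_ne_zero) (by linarith)
    exact mul_pos (by positivity) (by linarith)

theorem critPoly_pos (hn : n ≠ 0) (hx : 1 ≤ x) (hc : 0 < 2 * x + c) : 0 < critPoly n c x := by
  have h₁ : x ^ (n - 2) ≤ x ^ n := pow_le_pow_right₀ hx (Nat.sub_le n 2)
  have h₂ : x ≤ x ^ n := le_self_pow₀ hx (by omega)
  unfold critPoly
  nlinarith

theorem radialPoly_pos (hn : 2 ≤ n) (hx : 1 ≤ x) (hxa : 1 - a < x ^ 2) (hb : 0 ≤ b) :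
    0 < radialPoly n a b x := by
  have h₁ : x ^ 2 ≤ x ^ n := pow_le_pow_right₀ hx hn
  have h₂ : 0 ≤ x ^ 2 - 1 := by nlinarith
  have h₃ : x ^ 2 * (x ^ 2 - 1) ≤ x ^ n * (x ^ 2 - 1) := mul_le_mul_of_nonneg_right h₁ h₂
  have h₄ : 0 < x ^ 2 * (x ^ 2 - 1 + a) := mul_pos (by positivity) (by linarith)
  unfold radialPoly
  rw [pow_add]
  linarith

theorem critPoly_sign_of_neg (hn : 3 ≤ n) (hc : c < 0) :
    ∃ ρ₀ > 0, (∀ x ∈ Ioo 0 ρ₀, critPoly n c x < 0) ∧ ∀ x, ρ₀ < x → 0 < critPoly n c x := by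
  obtain ⟨β, hβ0, hβ1, hanti, hmono⟩ := exists_valley_critPoly hn c
  obtain ⟨ρ₀, hρ₀, -, hneg, hpos⟩ := exists_zero_of_valley continuous_critPoly.continuousOn
    hanti hmono hβ0.le (hβ1.le.trans (by linarith : (1 : ℝ) ≤ 1 - c))
    (critPoly_zero hn ▸ hc.le) (critPoly_pos (by omega) (by linarith) (by linarith))
  exact ⟨ρ₀, hβ0.trans_le hρ₀.1, hneg, hpos⟩

theorem critPoly_sign_of_least_root (hn : 3 ≤ n) (hc : 0 < c) {ξ : ℝ} (hξ : 0 < ξ)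
    (hroot : critPoly n c ξ = 0) (hmin : ∀ x, 0 < x → critPoly n c x = 0 → ξ ≤ x) :
    ∃ ξ₂, ξ ≤ ξ₂ ∧ ξ₂ < 1 ∧ (∀ x ∈ Ico 0 ξ, 0 < critPoly n c x) ∧
      (∀ x ∈ Ioo ξ ξ₂, critPoly n c x < 0) ∧ ∀ x, ξ₂ < x → 0 < critPoly n c x := by
  have hpos (x : ℝ) (hx : x ∈ Ico 0 ξ) : 0 < critPoly n c x :=
    pos_of_lt_least_pos_root continuous_critPoly (critPoly_zero hn ▸ hc) hmin hx
  obtain ⟨β, hβ0, hβ1, hanti, hmono⟩ := exists_valley_critPoly hn c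
  have hξβ : ξ ≤ β := by
    by_contra! h
    exact (hpos β ⟨hβ0.le, h⟩).not_gt (hroot ▸ hmono (mem_Ici.2 le_rfl) h.le h)
  obtain ⟨ξ₂, hξ₂, -, hneg, hpos'⟩ := exists_zero_of_valley continuous_critPoly.continuousOn
    (hanti.mono (Icc_subset_Icc hξ.le le_rfl)) hmono hξβ hβ1.le hroot.le
    (critPoly_pos (by omega) le_rfl (by linarith))
  exact ⟨ξ₂, hξβ.trans hξ₂.1, hξ₂.2, hpos, hneg, hpos'⟩

theorem exists_unique_root_neg_branch (hn : 3 ≤ n) {s ξ ε : ℝ} (hs : 0 < s) (hξ : 0 < ξ)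
    (hroot : critPoly n (2 * s) ξ = 0) (hmin : ∀ x, 0 < x → critPoly n (2 * s) x = 0 → ξ ≤ x)
    (hεξ : radialPoly n s (-(ε * s)) ξ < 0) (hε1 : ε < 1) :
    0 < ε ∧ ∃ ρ₂ > 0, ∀ ρ ≥ 0, -ρ ^ n * (1 - ρ ^ 2) = s * (ε - ρ ^ 2) ↔ ρ = ρ₂ := by
  obtain ⟨ξ₂, hξξ₂, hξ₂1, hPpos, hPneg, hPpos'⟩ :=
    critPoly_sign_of_least_root hn (by linarith) hξ hroot hmin
  have hξ₂ : 0 < ξ₂ := hξ.trans_le hξξ₂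
  set U := radialPoly n s (-(ε * s))
  have hUneg : ∀ x ∈ Icc 0 ξ₂, U x < 0 := by
    intro x hx
    rcases le_total x ξ with h | h
    · have hmono : MonotoneOn U (Icc 0 ξ) :=
        monotoneOn_radialPoly (by omega) (convex_Icc 0 ξ) fun y hy => by
          rw [interior_Icc] at hy
          exact mul_nonneg hy.1.le (hPpos y ⟨hy.1.le, hy.2⟩).le
      exact (hmono ⟨hx.1, h⟩ ⟨hξ.le, le_rfl⟩ h).trans_lt hεξ
    · have hanti : AntitoneOn U (Icc ξ ξ₂) :=
        antitoneOn_radialPoly (by omega) (convex_Icc ξ ξ₂) fun y hy => by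
          rw [interior_Icc] at hy
          exact mul_nonpos_of_nonneg_of_nonpos (hξ.trans hy.1).le (hPneg y hy).le
      exact (hanti ⟨le_rfl, hξξ₂⟩ ⟨h, hx.2⟩ h).trans_lt hεξ
  have hε : 0 < ε := by
    have hU0 : U 0 = -(ε * s) := radialPoly_zero (by omega)
    nlinarith [hUneg 0 ⟨le_rfl, hξ₂.le⟩]
  have hUmono : StrictMonoOn U (Ici ξ₂) :=
    strictMonoOn_radialPoly (by omega) (convex_Ici ξ₂) fun y hy => by
      rw [interior_Ici] at hy
      exact mul_pos (hξ₂.trans hy) (hPpos' y hy)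
  have hU1 : 0 < U 1 := by
    have : U 1 = s + -(ε * s) := radialPoly_one
    nlinarith
  obtain ⟨ρ₂, hρ₂, hUρ₂⟩ := intermediate_value_Icc hξ₂1.le continuous_radialPoly.continuousOn
    ⟨(hUneg ξ₂ ⟨hξ₂.le, le_rfl⟩).le, hU1.le⟩
  refine ⟨hε, ρ₂, hξ₂.trans_le hρ₂.1, fun ρ hρ => ?_⟩
  have hU : -ρ ^ n * (1 - ρ ^ 2) = s * (ε - ρ ^ 2) ↔ U ρ = 0 := by
    simp only [U, radialPoly]; constructor <;> intro h <;> linear_combination h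
  rw [hU]
  refine ⟨fun h => ?_, fun h => h ▸ hUρ₂⟩
  rcases le_or_gt ρ ξ₂ with h' | h'
  · exact absurd h (hUneg ρ ⟨hρ, h'⟩).ne
  · exact hUmono.injOn (mem_Ici.2 h'.le) hρ₂.1 (h.trans hUρ₂.symm)

theorem exists_two_roots_pos_branch (hn : 3 ≤ n) {s ε : ℝ} (hs : 0 < s) (hε : 0 < ε)
    (hε1 : ε < 1) :
    ∃ ρ₁ ρ₃, 0 < ρ₁ ∧ ρ₁ < ρ₃ ∧
      ∀ ρ ≥ 0, ρ ^ n * (1 - ρ ^ 2) = s * (ε - ρ ^ 2) ↔ ρ = ρ₁ ∨ ρ = ρ₃ := by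
  obtain ⟨ρ₀, hρ₀, hQneg, hQpos⟩ := critPoly_sign_of_neg hn (c := 2 * -s) (by linarith)
  set V := radialPoly n (-s) (ε * s)
  have hVanti : StrictAntiOn V (Icc 0 ρ₀) :=
    strictAntiOn_radialPoly (by omega) (convex_Icc 0 ρ₀) fun x hx => by
      rw [interior_Icc] at hx
      exact mul_neg_of_pos_of_neg hx.1 (hQneg x hx)
  have hVmono : StrictMonoOn V (Ici ρ₀) :=
    strictMonoOn_radialPoly (by omega) (convex_Ici ρ₀) fun x hx => by
      rw [interior_Ici] at hx
      exact mul_pos (hρ₀.trans hx) (hQpos x hx)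
  have hV0 : 0 < V 0 := by
    have : V 0 = ε * s := radialPoly_zero (by omega)
    rw [this]; positivity
  have hV1 : V 1 < 0 := by
    have : V 1 = -s + ε * s := radialPoly_one
    nlinarith
  have hVρ₀ : V ρ₀ < 0 := by
    rcases le_total ρ₀ 1 with h | h
    · exact (hVmono.monotoneOn (mem_Ici.2 le_rfl) h h).trans_lt hV1
    · exact (hVanti.antitoneOn ⟨zero_le_one, h⟩ ⟨hρ₀.le, le_rfl⟩ h).trans_lt hV1
  have hVd : 0 < V (ρ₀ + s + 2) :=
    radialPoly_pos (by omega) (by linarith) (by nlinarith) (by positivity)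
  obtain ⟨ρ₁, hρ₁, hVρ₁⟩ := intermediate_value_Icc' hρ₀.le
    continuous_radialPoly.continuousOn ⟨hVρ₀.le, hV0.le⟩
  obtain ⟨ρ₃, hρ₃, hVρ₃⟩ := intermediate_value_Icc (by linarith : ρ₀ ≤ ρ₀ + s + 2)
    continuous_radialPoly.continuousOn ⟨hVρ₀.le, hVd.le⟩
  have hρ₁0 : 0 < ρ₁ := hρ₁.1.lt_of_ne (by rintro rfl; linarith)
  have hρ₁₀ : ρ₁ < ρ₀ := hρ₁.2.lt_of_ne (by rintro rfl; linarith)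
  refine ⟨ρ₁, ρ₃, hρ₁0, hρ₁₀.trans_le hρ₃.1, fun ρ hρ => ?_⟩
  have hV : ρ ^ n * (1 - ρ ^ 2) = s * (ε - ρ ^ 2) ↔ V ρ = 0 := by
    simp only [V, radialPoly]; constructor <;> intro h <;> linear_combination -h
  rw [hV]
  refine ⟨fun h => ?_, by rintro (rfl | rfl) <;> assumption⟩
  rcases le_total ρ ρ₀ with h' | h'
  · exact Or.inl (hVanti.injOn ⟨hρ, h'⟩ ⟨hρ₁0.le, hρ₁₀.le⟩ (h.trans hVρ₁.symm))
  · exact Or.inr (hVmono.injOn (mem_Ici.2 h') hρ₃.1 (h.trans hVρ₃.symm))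

end

theorem card_nthRootsFinset_of_ne_zero {n : ℕ} (hn : n ≠ 0) {c : ℂ} (hc : c ≠ 0) :
    (nthRootsFinset n c).card = n := by
  classical
  have hζ := Complex.isPrimitiveRoot_exp n hn
  rw [nthRootsFinset_def, Multiset.toFinset_card_of_nodup (hζ.nthRoots_nodup hc),
    hζ.card_nthRoots, if_pos (IsAlgClosed.exists_pow_nat_eq c (Nat.pos_of_ne_zero hn))]

theorem ncard_setOf_pow_mem {n : ℕ} (hn : n ≠ 0) (C : Finset ℂ) (hC : 0 ∉ C) :
    {z : ℂ | z ^ n ∈ C}.ncard = n * C.card := by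
  classical
  have hroots (c : ℂ) (z : ℂ) : z ∈ nthRootsFinset n c ↔ z ^ n = c :=
    mem_nthRootsFinset (Nat.pos_of_ne_zero hn) c
  have hset : {z : ℂ | z ^ n ∈ C} = ↑(C.biUnion (nthRootsFinset n ·)) := by
    ext z; simp [hroots]
  rw [hset, Set.ncard_coe_finset, Finset.card_biUnion, Finset.sum_congr rfl
    fun c hc => card_nthRootsFinset_of_ne_zero hn (ne_of_mem_of_not_mem hc hC),
    Finset.sum_const, smul_eq_mul, mul_comm]
  intro a _ b _ hab
  exact Finset.disjoint_left.2 fun z ha hb =>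
    hab (((hroots a z).1 ha).symm.trans ((hroots b z).1 hb))

theorem div_eq_conj_iff {n : ℕ} (hn : n ≠ 0) {s ε : ℝ} (hs : s ≠ 0) (hε0 : ε ≠ 0) (hε1 : ε ≠ 1)
    (z : ℂ) :
    (z ≠ 0 ∧ z ^ n ≠ s ∧ (z ^ n - ε * s) / (z * (z ^ n - s)) = conj z) ↔
      ∃ c : ℝ, z ^ n = c ∧ c * (1 - ‖z‖ ^ 2) = s * (ε - ‖z‖ ^ 2) := by
  have hconj : conj z * z = ((‖z‖ ^ 2 : ℝ) : ℂ) := by rw [conj_mul']; push_cast; rfl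
  constructor
  · rintro ⟨hz, hzs, h⟩
    rw [div_eq_iff (mul_ne_zero hz (sub_ne_zero.2 hzs))] at h
    have h' : z ^ n * ((1 - ‖z‖ ^ 2 : ℝ) : ℂ) = ((s * (ε - ‖z‖ ^ 2) : ℝ) : ℂ) := by
      push_cast at hconj ⊢; linear_combination h + (z ^ n - s) * hconj
    have hz1 : 1 - ‖z‖ ^ 2 ≠ 0 := by
      intro h1
      rw [h1, ofReal_zero, mul_zero, eq_comm, ofReal_eq_zero] at h'
      exact mul_ne_zero hs (sub_ne_zero.2 hε1) (by linear_combination h' - s * h1)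
    refine ⟨s * (ε - ‖z‖ ^ 2) / (1 - ‖z‖ ^ 2), ?_, div_mul_cancel₀ _ hz1⟩
    rw [ofReal_div, eq_div_iff (ofReal_ne_zero.2 hz1), h']
  · rintro ⟨c, hzc, hc⟩
    have hz : z ≠ 0 := by
      rintro rfl
      rw [zero_pow hn, eq_comm, ofReal_eq_zero] at hzc
      subst hzc
      rw [norm_zero, zero_pow two_ne_zero, zero_mul, sub_zero, eq_comm] at hc
      exact mul_ne_zero hs hε0 hc
    have hzs : z ^ n ≠ s := by
      rw [hzc, Ne, ofReal_inj]
      rintro rfl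
      exact mul_ne_zero hs (sub_ne_zero.2 hε1.symm) (by linear_combination hc)
    refine ⟨hz, hzs, ?_⟩
    rw [div_eq_iff (mul_ne_zero hz (sub_ne_zero.2 hzs)), ← mul_assoc, hconj, hzc]
    have := congrArg ofReal hc
    push_cast at this ⊢
    linear_combination this

theorem exists_ofReal_iff_pow_mem {n : ℕ} (hn : n ≠ 0) {s ε ρ₁ ρ₂ ρ₃ : ℝ} (h₁ : 0 ≤ ρ₁)
    (h₂ : 0 ≤ ρ₂) (h₃ : 0 ≤ ρ₃)
    (hV : ∀ ρ ≥ 0, ρ ^ n * (1 - ρ ^ 2) = s * (ε - ρ ^ 2) ↔ ρ = ρ₁ ∨ ρ = ρ₃)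
    (hU : ∀ ρ ≥ 0, -ρ ^ n * (1 - ρ ^ 2) = s * (ε - ρ ^ 2) ↔ ρ = ρ₂) (z : ℂ) :
    (∃ c : ℝ, z ^ n = c ∧ c * (1 - ‖z‖ ^ 2) = s * (ε - ‖z‖ ^ 2)) ↔
      z ^ n ∈ ({(ρ₁ : ℂ) ^ n, -(ρ₂ : ℂ) ^ n, (ρ₃ : ℂ) ^ n} : Finset ℂ) := by
  have hnorm {ρ : ℝ} (hρ : 0 ≤ ρ) (h : ‖z ^ n‖ = ρ ^ n) : ‖z‖ = ρ :=
    (pow_left_inj₀ (norm_nonneg z) hρ hn).1 (norm_pow z n ▸ h)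
  simp only [Finset.mem_insert, Finset.mem_singleton]
  constructor
  · rintro ⟨c, hzc, hc⟩
    have habs : |c| = ‖z‖ ^ n := by rw [← norm_pow, hzc, norm_real, Real.norm_eq_abs]
    rcases (abs_eq (by positivity)).1 habs with rfl | rfl
    · rcases (hV _ (norm_nonneg z)).1 hc with h | h
      · left; rw [hzc, ← h]; push_cast; rfl
      · right; right; rw [hzc, ← h]; push_cast; rfl
    · right; left; rw [hzc, ← (hU _ (norm_nonneg z)).1 hc]; push_cast; rfl
  · rintro (h | h | h)
    · have hz := hnorm h₁ (by rw [h, norm_pow, norm_real, Real.norm_of_nonneg h₁])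
      exact ⟨ρ₁ ^ n, by rw [h]; push_cast; rfl, hz ▸ (hV ρ₁ h₁).2 (Or.inl rfl)⟩
    · have hz := hnorm h₂ (by rw [h, norm_neg, norm_pow, norm_real, Real.norm_of_nonneg h₂])
      exact ⟨-ρ₂ ^ n, by rw [h]; push_cast; rfl, hz ▸ (hU ρ₂ h₂).2 rfl⟩
    · have hz := hnorm h₃ (by rw [h, norm_pow, norm_real, Real.norm_of_nonneg h₃])
      exact ⟨ρ₃ ^ n, by rw [h]; push_cast; rfl, hz ▸ (hV ρ₃ h₃).2 (Or.inr rfl)⟩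

theorem stmt_12_general (n : ℕ) (hn : 3 ≤ n) (r : ℝ) (hr : 0 < r)
    (ξ₁ : ℝ) (hξ₁pos : 0 < ξ₁)
    (hξ₁root : ((n : ℝ) + 2) * ξ₁ ^ n - (n : ℝ) * ξ₁ ^ (n - 2) + 2 * r ^ n = 0)
    (hξ₁min : ∀ x : ℝ, 0 < x →
      ((n : ℝ) + 2) * x ^ n - (n : ℝ) * x ^ (n - 2) + 2 * r ^ n = 0 → ξ₁ ≤ x)
    (ε : ℝ)
    (hεgt : (ξ₁ ^ (n + 2) - ξ₁ ^ n + r ^ n * ξ₁ ^ 2) / r ^ n < ε) (hε1 : ε < 1) :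
    {z : ℂ | z ≠ 0 ∧ z ^ n ≠ (r : ℂ) ^ n ∧
      (z ^ n - (ε : ℂ) * (r : ℂ) ^ n) / (z * (z ^ n - (r : ℂ) ^ n)) =
        (starRingEnd ℂ) z}.ncard = 3 * n := by
  have hn0 : n ≠ 0 := by omega
  have hs : 0 < r ^ n := pow_pos hr n
  have hεξ : radialPoly n (r ^ n) (-(ε * r ^ n)) ξ₁ < 0 := by
    rw [div_lt_iff₀ hs] at hεgt
    unfold radialPoly
    linarith
  obtain ⟨hε, ρ₂, hρ₂, hU⟩ :=
    exists_unique_root_neg_branch hn hs hξ₁pos hξ₁root hξ₁min hεξ hε1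
  obtain ⟨ρ₁, ρ₃, hρ₁, hρ₁₃, hV⟩ := exists_two_roots_pos_branch hn hs hε hε1
  have hρ₃ : 0 < ρ₃ := hρ₁.trans hρ₁₃
  set C : Finset ℂ := {(ρ₁ : ℂ) ^ n, -(ρ₂ : ℂ) ^ n, (ρ₃ : ℂ) ^ n}
  have hC0 : 0 ∉ C := by simp [C, hρ₁.ne', hρ₂.ne', hρ₃.ne', hn0, eq_comm (a := (0 : ℂ))]
  have hC3 : C.card = 3 := by
    have h₁ := pow_pos hρ₁ n
    have h₂ := pow_pos hρ₂ n
    have h₁₃ := pow_lt_pow_left₀ hρ₁₃ hρ₁.le hn0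
    have h₃ := pow_pos hρ₃ n
    refine Finset.card_eq_three.2 ⟨_, _, _, ?_, ?_, ?_, rfl⟩ <;> intro h <;> norm_cast at h <;>
      linarith
  calc _ = {z : ℂ | z ^ n ∈ C}.ncard := by
        congr 1; ext z
        rw [Set.mem_ofPred_eq, Set.mem_ofPred_eq, ← ofReal_pow, div_eq_conj_iff hn0 hs.ne' hε.ne'
          hε1.ne, exists_ofReal_iff_pow_mem hn0 hρ₁.le hρ₂.le hρ₃.le hV hU]
    _ = 3 * n := by rw [ncard_setOf_pow_mem hn0 C hC0, hC3, mul_comm]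

/-- For `n ≥ 3`, `0 < r < r_crit` and `ε* < ε < 1`, the equation
`(z^n − εr^n)/(z(z^n − r^n)) = conj z` has exactly `3n` solutions. -/
theorem stmt_12 (n : ℕ) (hn : 3 ≤ n) (r : ℝ) (hr : 0 < r)
    (hrc : r < ((((n : ℝ) - 2) / n) ^ (((n : ℝ) - 2) / 2) -
          (((n : ℝ) - 2) / n) ^ ((n : ℝ) / 2)) ^ ((1 : ℝ) / n))
    (ξ₁ : ℝ) (hξ₁pos : 0 < ξ₁)
    (hξ₁root : ((n : ℝ) + 2) * ξ₁ ^ n - (n : ℝ) * ξ₁ ^ (n - 2) + 2 * r ^ n = 0)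
    (hξ₁min : ∀ x : ℝ, 0 < x →
      ((n : ℝ) + 2) * x ^ n - (n : ℝ) * x ^ (n - 2) + 2 * r ^ n = 0 → ξ₁ ≤ x)
    (ε : ℝ)
    (hεgt : (ξ₁ ^ (n + 2) - ξ₁ ^ n + r ^ n * ξ₁ ^ 2) / r ^ n < ε) (hε1 : ε < 1) :
    {z : ℂ | z ≠ 0 ∧ z ^ n ≠ (r : ℂ) ^ n ∧
      (z ^ n - (ε : ℂ) * (r : ℂ) ^ n) / (z * (z ^ n - (r : ℂ) ^ n)) =
        (starRingEnd ℂ) z}.ncard = 3 * n :=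
  stmt_12_general n hn r hr ξ₁ hξ₁pos hξ₁root hξ₁min ε hεgt hε1
end

section
/- Let n ≥ 3, 0 < ε < 1, and r ≥ ((n−2)/(n+2))^((n−2)/(2n)). Then the equation (z^n − ε r^n)/(z(z^n − r^n)) = conj(z) has exactly 3n complex solutions. -/
/-!
With `a = r ^ n`, multiplying out turns the equation into `z ^ n - ε a = |z|² (z ^ n - a)`, so
`z ^ n` is a real number `t` with `t (ρ² - 1) = a (ρ² - ε)`, where `ρ = |z|` and `|t| = ρ ^ n`.
For `t = ρ ^ n` this has exactly two positive roots `ρ`, one below `√ε` and one above `1`.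
For `t = -ρ ^ n` the difference of the two sides has derivative
`ρ ((n + 2) ρ ^ n - n ρ ^ (n - 2) + 2a)`. Since `(n + 2) ρ ^ n - n ρ ^ (n - 2)` has minimum
`-2 s ^ (n - 2)` at `s = √((n - 2)/(n + 2))` and the bound on `r` is exactly `a ≥ s ^ (n - 2)`,
the difference is strictly increasing and there is exactly one root. Each of the three resulting values of `t` has
`n` distinct `n`-th roots.
-/

open Complex ComplexConjugate Finset Set

theorem Complex.card_nthRootsFinset {n : ℕ} (hn : n ≠ 0) {c : ℂ} (hc : c ≠ 0) :
    #(Polynomial.nthRootsFinset n c) = n := by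
  classical
  have hζ := Complex.isPrimitiveRoot_exp n hn
  rw [Polynomial.nthRootsFinset_def, Multiset.toFinset_card_of_nodup (hζ.nthRoots_nodup hc),
    hζ.card_nthRoots, if_pos (IsAlgClosed.exists_pow_nat_eq c (Nat.pos_of_ne_zero hn))]

theorem Complex.ncard_preimage_pow {n : ℕ} (hn : n ≠ 0) (T : Finset ℂ) (hT : 0 ∉ T) :
    ((· ^ n) ⁻¹' (T : Set ℂ)).ncard = n * #T := by
  classical
  have hpre : (· ^ n) ⁻¹' (T : Set ℂ) =
      ((T.biUnion fun c => Polynomial.nthRootsFinset n c : Finset ℂ) : Set ℂ) := by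
    ext z
    simp [Polynomial.mem_nthRootsFinset (Nat.pos_of_ne_zero hn)]
  rw [hpre, Set.ncard_coe_finset, card_biUnion, sum_congr rfl fun c hc =>
    Complex.card_nthRootsFinset hn (ne_of_mem_of_not_mem hc hT), sum_const, smul_eq_mul, mul_comm]
  intro c _ d _ hcd
  exact Finset.disjoint_left.mpr fun z hzc hzd => hcd <| by
    rw [Polynomial.mem_nthRootsFinset (Nat.pos_of_ne_zero hn)] at hzc hzd
    rw [← hzc, ← hzd]

theorem div_mul_eq_conj_iff {z w u : ℂ} (hz : z ≠ 0) (hw : w ≠ 0) :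
    u / (z * w) = conj z ↔ u = (‖z‖ ^ 2 : ℝ) * w := by
  rw [div_eq_iff (mul_ne_zero hz hw), ← mul_assoc, conj_mul', ofReal_pow]

theorem div_mul_pow_sub_eq_conj_iff {n : ℕ} (hn : n ≠ 0) {a ε : ℝ} (ha : a ≠ 0) (hε : ε ≠ 1)
    (z : ℂ) :
    (z ≠ 0 ∧ z ^ n ≠ a ∧ (z ^ n - ε * a) / (z * (z ^ n - a)) = conj z) ↔
      ∃ t : ℝ, z ^ n = t ∧ ∃ ρ > 0, |t| = ρ ^ n ∧ t * (ρ ^ 2 - 1) = a * (ρ ^ 2 - ε) := by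
  constructor
  · rintro ⟨hz, hza, heq⟩
    rw [div_mul_eq_conj_iff hz (sub_ne_zero.mpr hza)] at heq
    have hρ : ‖z‖ ^ 2 - 1 ≠ 0 := by
      rintro h
      rw [sub_eq_zero.mp h, ofReal_one, one_mul, sub_right_inj, ← ofReal_mul, ofReal_inj] at heq
      exact hε (mul_left_cancel₀ ha (by linarith))
    have hzt : z ^ n = (a * (‖z‖ ^ 2 - ε) / (‖z‖ ^ 2 - 1) : ℝ) := by
      rw [ofReal_div, eq_div_iff (ofReal_ne_zero.mpr hρ)]
      push_cast at heq ⊢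
      linear_combination -heq
    refine ⟨_, hzt, ‖z‖, norm_pos_iff.mpr hz, ?_, by field_simp⟩
    rw [← Real.norm_eq_abs, ← norm_real, ← hzt, norm_pow]
  · rintro ⟨t, hzt, ρ, hρ, hρt, ht⟩
    have hnorm : ‖z‖ = ρ := by
      refine (pow_left_inj₀ (norm_nonneg z) hρ.le hn).mp ?_
      rw [← norm_pow, hzt, norm_real, Real.norm_eq_abs, hρt]
    have hz : z ≠ 0 := by
      rintro rfl
      simp only [norm_zero] at hnorm
      exact hρ.ne hnorm
    have hta : t ≠ a := by
      rintro rfl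
      exact hε (mul_left_cancel₀ ha (by linarith))
    refine ⟨hz, by rwa [hzt, ne_eq, ofReal_inj], ?_⟩
    rw [div_mul_eq_conj_iff hz (by rwa [hzt, ne_eq, sub_eq_zero, ofReal_inj]), hzt, hnorm]
    exact_mod_cast (by linear_combination -ht : t - ε * a = ρ ^ 2 * (t - a))

theorem sq_lt_and_one_lt_sq_of_roots {n : ℕ} {a ε x y : ℝ} (ha : 0 < a) (hε : ε < 1)
    (hx : 0 < x) (hxy : x < y) (hxr : x ^ n * (x ^ 2 - 1) = a * (x ^ 2 - ε))
    (hyr : y ^ n * (y ^ 2 - 1) = a * (y ^ 2 - ε)) : x ^ 2 < ε ∧ 1 < y ^ 2 := by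
  have outside : ∀ ρ > 0, ρ ^ n * (ρ ^ 2 - 1) = a * (ρ ^ 2 - ε) → ρ ^ 2 < ε ∨ 1 < ρ ^ 2 := by
    intro ρ hρ hρr
    by_contra! h
    have hl : ρ ^ n * (ρ ^ 2 - 1) ≤ 0 :=
      mul_nonpos_of_nonneg_of_nonpos (by positivity) (by linarith)
    have hr : 0 ≤ a * (ρ ^ 2 - ε) := mul_nonneg ha.le (by linarith)
    have h1 : ρ ^ 2 - 1 = 0 :=
      (mul_eq_zero.mp (by linarith : ρ ^ n * (ρ ^ 2 - 1) = 0)).resolve_left (pow_ne_zero n hρ.ne')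
    have h2 : ρ ^ 2 - ε = 0 :=
      (mul_eq_zero.mp (by linarith : a * (ρ ^ 2 - ε) = 0)).resolve_left ha.ne'
    linarith
  have hxy2 : x ^ 2 < y ^ 2 := pow_lt_pow_left₀ hxy hx.le two_ne_zero
  -- cross-multiplying the two roots shows that `(x² - 1)(y² - ε)` cannot be nonnegative
  have hsign : (x ^ 2 - 1) * (y ^ 2 - ε) < 0 := by
    by_contra! h
    have hpow : x ^ n ≤ y ^ n := pow_le_pow_left₀ hx.le hxy.le n
    have hgap : (x ^ 2 - 1) * (y ^ 2 - ε) < (y ^ 2 - 1) * (x ^ 2 - ε) := by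
      nlinarith [mul_pos (sub_pos.mpr hε) (sub_pos.mpr hxy2)]
    have : x ^ n * ((x ^ 2 - 1) * (y ^ 2 - ε)) < y ^ n * ((y ^ 2 - 1) * (x ^ 2 - ε)) :=
      calc _ ≤ y ^ n * ((x ^ 2 - 1) * (y ^ 2 - ε)) := mul_le_mul_of_nonneg_right hpow h
        _ < _ := mul_lt_mul_of_pos_left hgap (pow_pos (hx.trans hxy) n)
    have : x ^ n * (x ^ 2 - 1) * (y ^ 2 - ε) = y ^ n * (y ^ 2 - 1) * (x ^ 2 - ε) := by
      rw [hxr, hyr]; ring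
    linarith
  rcases outside x hx hxr with hx' | hx' <;> rcases outside y (hx.trans hxy) hyr with hy' | hy'
  all_goals first | exact ⟨hx', hy'⟩ | nlinarith

theorem exists_two_pos_roots {n : ℕ} (hn : n ≠ 0) {a ε : ℝ} (ha : 0 < a) (hε0 : 0 < ε)
    (hε1 : ε < 1) : ∃ ρ₁ ρ₂, 0 < ρ₁ ∧ ρ₁ < ρ₂ ∧
      ∀ ρ > 0, (ρ ^ n * (ρ ^ 2 - 1) = a * (ρ ^ 2 - ε) ↔ ρ = ρ₁ ∨ ρ = ρ₂) := by
  set f : ℝ → ℝ := fun x => x ^ n * (x ^ 2 - 1) - a * (x ^ 2 - ε)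
  have hf : Continuous f := by fun_prop
  have hsqrt : 0 < √ε := Real.sqrt_pos.mpr hε0
  obtain ⟨ρ₁, ⟨hρ₁0, hρ₁ε⟩, hρ₁⟩ : ∃ ρ ∈ Ioo 0 √ε, f ρ = 0 := by
    refine intermediate_value_Ioo' hsqrt.le hf.continuousOn ⟨?_, ?_⟩
    · simp only [f, Real.sq_sqrt hε0.le, sub_self, mul_zero, sub_zero]
      exact mul_neg_of_pos_of_neg (pow_pos hsqrt n) (by linarith)
    · simp only [f, zero_pow hn, zero_mul, zero_sub]
      nlinarith
  obtain ⟨ρ₂, ⟨hρ₂1, -⟩, hρ₂⟩ : ∃ ρ ∈ Ioo 1 (a + 2), f ρ = 0 := by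
    refine intermediate_value_Ioo (by linarith) hf.continuousOn ⟨?_, ?_⟩
    · simp only [f]; nlinarith
    · have : a + 2 ≤ (a + 2) ^ n := le_self_pow₀ (by linarith) hn
      have : (a + 2) * ((a + 2) ^ 2 - 1) ≤ (a + 2) ^ n * ((a + 2) ^ 2 - 1) :=
        mul_le_mul_of_nonneg_right this (by nlinarith)
      simp only [f]; nlinarith
  replace hρ₁ : ρ₁ ^ n * (ρ₁ ^ 2 - 1) = a * (ρ₁ ^ 2 - ε) := sub_eq_zero.mp hρ₁
  replace hρ₂ : ρ₂ ^ n * (ρ₂ ^ 2 - 1) = a * (ρ₂ ^ 2 - ε) := sub_eq_zero.mp hρ₂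
  have hρ₁ε : ρ₁ ^ 2 < ε := (Real.lt_sqrt hρ₁0.le).mp hρ₁ε
  have hρ₂1 : 1 < ρ₂ ^ 2 := one_lt_pow₀ hρ₂1 two_ne_zero
  have hρ₁₂ : ρ₁ < ρ₂ := by nlinarith
  refine ⟨ρ₁, ρ₂, hρ₁0, hρ₁₂, fun ρ hρ => ⟨fun hρr => ?_, ?_⟩⟩
  · by_contra! hne
    rcases hne.1.lt_or_gt with h₁ | h₁
    · linarith [(sq_lt_and_one_lt_sq_of_roots ha hε1 hρ h₁ hρr hρ₁).2]
    have h1ρ := (sq_lt_and_one_lt_sq_of_roots ha hε1 hρ₁0 h₁ hρ₁ hρr).2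
    rcases hne.2.lt_or_gt with h₂ | h₂
    · linarith [(sq_lt_and_one_lt_sq_of_roots ha hε1 hρ h₂ hρr hρ₂).1]
    · linarith [(sq_lt_and_one_lt_sq_of_roots ha hε1 (hρ₁0.trans hρ₁₂) h₂ hρ₂ hρr).1]
  · rintro (rfl | rfl) <;> assumption

noncomputable def criticalRadius (n : ℕ) : ℝ := √(((n : ℝ) - 2) / (n + 2))

theorem criticalRadius_pos {n : ℕ} (hn : 3 ≤ n) : 0 < criticalRadius n := by
  have : (3 : ℝ) ≤ n := by exact_mod_cast hn
  exact Real.sqrt_pos.mpr (div_pos (by linarith) (by positivity))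

theorem add_two_mul_criticalRadius_sq {n : ℕ} (hn : 2 ≤ n) :
    (n + 2) * criticalRadius n ^ 2 = n - 2 := by
  have : (2 : ℝ) ≤ n := by exact_mod_cast hn
  rw [criticalRadius, Real.sq_sqrt (div_nonneg (by linarith) (by positivity))]
  field_simp

theorem criticalRadius_pow_le_pow {n : ℕ} (hn : 2 ≤ n) {r : ℝ}
    (hr : (((n : ℝ) - 2) / (n + 2)) ^ (((n : ℝ) - 2) / (2 * n)) ≤ r) :
    criticalRadius n ^ (n - 2) ≤ r ^ n := by
  have hc : 0 ≤ ((n : ℝ) - 2) / (n + 2) := by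
    have : (2 : ℝ) ≤ n := by exact_mod_cast hn
    exact div_nonneg (by linarith) (by positivity)
  calc criticalRadius n ^ (n - 2)
      = ((((n : ℝ) - 2) / (n + 2)) ^ (((n : ℝ) - 2) / (2 * n))) ^ n := by
        rw [criticalRadius, Real.sqrt_eq_rpow, ← Real.rpow_natCast, ← Real.rpow_natCast,
          ← Real.rpow_mul hc, ← Real.rpow_mul hc, Nat.cast_sub hn]
        congr 1
        have : (n : ℝ) ≠ 0 := by positivity
        field_simp
        push_cast
        ring
    _ ≤ r ^ n := pow_le_pow_left₀ (Real.rpow_nonneg hc _) hr n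

theorem neg_two_mul_criticalRadius_pow_lt {n : ℕ} (hn : 3 ≤ n) {x : ℝ} (hx : 0 ≤ x)
    (hxs : x ≠ criticalRadius n) :
    -2 * criticalRadius n ^ (n - 2) < (n + 2) * x ^ n - n * x ^ (n - 2) := by
  have hs := criticalRadius_pos hn
  have hs2 := add_two_mul_criticalRadius_sq (n := n) (by omega)
  obtain ⟨m, rfl⟩ := Nat.exists_eq_add_of_le' hn
  set s := criticalRadius (m + 3)
  push_cast at hs2 ⊢
  set g : ℝ → ℝ := fun x => ((m : ℝ) + 3 + 2) * x ^ (m + 3) - (m + 3) * x ^ (m + 1)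
  have hg' : ∀ x, HasDerivAt g ((m + 3) * x ^ m * ((m + 5) * x ^ 2 - (m + 1))) x := fun x =>
    (((hasDerivAt_pow (m + 3) x).const_mul ((m : ℝ) + 3 + 2)).sub
      ((hasDerivAt_pow (m + 1) x).const_mul ((m : ℝ) + 3))).congr_deriv (by
        simp only [Nat.add_sub_cancel, Nat.add_succ_sub_one]; push_cast; ring)
  have hanti : StrictAntiOn g (Icc 0 s) := by
    refine strictAntiOn_of_deriv_neg (convex_Icc 0 s) (by fun_prop) fun x hx => ?_
    rw [interior_Icc] at hx
    rw [(hg' x).deriv]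
    have : x ^ 2 < s ^ 2 := pow_lt_pow_left₀ hx.2 hx.1.le two_ne_zero
    exact mul_neg_of_pos_of_neg (by have := hx.1; positivity) (by nlinarith)
  have hmono : StrictMonoOn g (Ici s) := by
    refine strictMonoOn_of_deriv_pos (convex_Ici s) (by fun_prop) fun x hx => ?_
    rw [interior_Ici] at hx
    rw [(hg' x).deriv]
    have : s ^ 2 < x ^ 2 := pow_lt_pow_left₀ hx hs.le two_ne_zero
    exact mul_pos (by have := hs.trans hx; positivity) (by nlinarith)
  have hgs : g s = -2 * s ^ (m + 1) := by
    simp only [g]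
    linear_combination s ^ (m + 1) * hs2
  rw [← hgs]
  rcases hxs.lt_or_gt with h | h
  · exact hanti ⟨hx, h.le⟩ ⟨hs.le, le_rfl⟩ h
  · exact hmono self_mem_Ici h.le h

theorem exists_unique_pos_root_of_criticalRadius_pow_le {n : ℕ} (hn : 3 ≤ n) {a ε : ℝ}
    (hε : 0 < ε) (ha : criticalRadius n ^ (n - 2) ≤ a) :
    ∃ ρ₃ > 0, ∀ ρ > 0, (-ρ ^ n * (ρ ^ 2 - 1) = a * (ρ ^ 2 - ε) ↔ ρ = ρ₃) := by
  set s := criticalRadius n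
  have hs : 0 < s := criticalRadius_pos hn
  have ha0 : 0 < a := (pow_pos hs _).trans_le ha
  set Q : ℝ → ℝ := fun x => x ^ n * (x ^ 2 - 1) + a * (x ^ 2 - ε)
  have hQ'pos : ∀ x, 0 < x → x ≠ s → 0 < deriv Q x := fun x hx hxs => by
    have hQ' : HasDerivAt Q (x * ((n + 2) * x ^ n - n * x ^ (n - 2) + 2 * a)) x := by
      obtain ⟨m, rfl⟩ := Nat.exists_eq_add_of_le' hn
      refine ((hasDerivAt_pow (m + 3) x).mul ((hasDerivAt_pow 2 x).sub_const 1)).add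
        (((hasDerivAt_pow 2 x).sub_const ε).const_mul a) |>.congr_deriv ?_
      simp only [Nat.add_succ_sub_one]
      push_cast
      ring
    rw [hQ'.deriv]
    have := neg_two_mul_criticalRadius_pow_lt hn hx.le hxs
    exact mul_pos hx (by linarith)
  have hmono : StrictMonoOn Q (Ici 0) := by
    rw [← Icc_union_Ici_eq_Ici hs.le]
    refine StrictMonoOn.union ?_ ?_ (isGreatest_Icc hs.le) isLeast_Ici
    · refine strictMonoOn_of_deriv_pos (convex_Icc 0 s) (by fun_prop) fun x hx => ?_
      rw [interior_Icc] at hx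
      exact hQ'pos x hx.1 hx.2.ne
    · refine strictMonoOn_of_deriv_pos (convex_Ici s) (by fun_prop) fun x hx => ?_
      rw [interior_Ici] at hx
      exact hQ'pos x (hs.trans hx) hx.ne'
  have hX : 0 < √(1 + ε) := Real.sqrt_pos.mpr (by linarith)
  obtain ⟨ρ₃, ⟨hρ₃, -⟩, hQρ₃⟩ : ∃ ρ ∈ Ioo 0 √(1 + ε), Q ρ = 0 := by
    refine intermediate_value_Ioo hX.le (by fun_prop) ⟨?_, ?_⟩
    · simp only [Q, zero_pow (by omega : n ≠ 0)]
      nlinarith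
    · simp only [Q, Real.sq_sqrt (by linarith : (0 : ℝ) ≤ 1 + ε)]
      have := pow_pos hX n
      nlinarith
  refine ⟨ρ₃, hρ₃, fun ρ hρ => ?_⟩
  rw [← hmono.injOn.eq_iff hρ.le hρ₃.le, hQρ₃]
  simp only [Q]
  constructor <;> intro h <;> linarith

theorem exists_radius_iff_of_roots {n : ℕ} {a ε ρ₁ ρ₂ ρ₃ : ℝ}
    (hρ₁ : 0 < ρ₁) (hρ₂ : 0 < ρ₂) (hρ₃ : 0 < ρ₃)
    (hP : ∀ ρ > 0, (ρ ^ n * (ρ ^ 2 - 1) = a * (ρ ^ 2 - ε) ↔ ρ = ρ₁ ∨ ρ = ρ₂))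
    (hQ : ∀ ρ > 0, (-ρ ^ n * (ρ ^ 2 - 1) = a * (ρ ^ 2 - ε) ↔ ρ = ρ₃)) (t : ℝ) :
    (∃ ρ > 0, |t| = ρ ^ n ∧ t * (ρ ^ 2 - 1) = a * (ρ ^ 2 - ε)) ↔
      t = ρ₁ ^ n ∨ t = ρ₂ ^ n ∨ t = -ρ₃ ^ n := by
  constructor
  · rintro ⟨ρ, hρ, hρt, ht⟩
    rcases abs_choice t with habs | habs <;> rw [habs] at hρt
    · rw [hρt] at ht
      rcases (hP ρ hρ).mp ht with rfl | rfl <;> simp [hρt]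
    · rw [neg_eq_iff_eq_neg.mp hρt] at ht ⊢
      rw [(hQ ρ hρ).mp ht]
      simp
  · rintro (rfl | rfl | rfl)
    · exact ⟨ρ₁, hρ₁, abs_of_pos (by positivity), (hP ρ₁ hρ₁).mpr (Or.inl rfl)⟩
    · exact ⟨ρ₂, hρ₂, abs_of_pos (by positivity), (hP ρ₂ hρ₂).mpr (Or.inr rfl)⟩
    · exact ⟨ρ₃, hρ₃, by rw [abs_neg, abs_of_pos (by positivity)], (hQ ρ₃ hρ₃).mpr rfl⟩

/-- For `n ≥ 3`, `0 < ε < 1` and `r ≥ ((n−2)/(n+2))^((n−2)/(2n))`, the equation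
`(z^n − εr^n)/(z(z^n − r^n)) = conj z` has exactly `3n` solutions. -/
theorem stmt_13 (n : ℕ) (hn : 3 ≤ n) (ε r : ℝ) (hε0 : 0 < ε) (hε1 : ε < 1)
    (hr : r ≥ (((n : ℝ) - 2) / ((n : ℝ) + 2)) ^ ((((n : ℝ) - 2)) / (2 * (n : ℝ)))) :
    {z : ℂ | z ≠ 0 ∧ z ^ n ≠ (r : ℂ) ^ n ∧
      (z ^ n - (ε : ℂ) * (r : ℂ) ^ n) / (z * (z ^ n - (r : ℂ) ^ n)) =
        (starRingEnd ℂ) z}.ncard = 3 * n := by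
  have hn0 : n ≠ 0 := by omega
  have ha : criticalRadius n ^ (n - 2) ≤ r ^ n := criticalRadius_pow_le_pow (by omega) hr
  have ha0 : 0 < r ^ n := (pow_pos (criticalRadius_pos hn) _).trans_le ha
  obtain ⟨ρ₁, ρ₂, hρ₁, hρ₁₂, hP⟩ := exists_two_pos_roots hn0 ha0 hε0 hε1
  obtain ⟨ρ₃, hρ₃, hQ⟩ := exists_unique_pos_root_of_criticalRadius_pow_le hn hε0 ha
  have hρ₂ : 0 < ρ₂ := hρ₁.trans hρ₁₂
  have hS : {z : ℂ | z ≠ 0 ∧ z ^ n ≠ (r : ℂ) ^ n ∧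
      (z ^ n - (ε : ℂ) * (r : ℂ) ^ n) / (z * (z ^ n - (r : ℂ) ^ n)) = conj z} =
      (· ^ n) ⁻¹' ↑({((ρ₁ ^ n : ℝ) : ℂ), ((ρ₂ ^ n : ℝ) : ℂ), ((-ρ₃ ^ n : ℝ) : ℂ)} : Finset ℂ) := by
    ext z
    rw [mem_ofPred_eq, ← ofReal_pow, div_mul_pow_sub_eq_conj_iff hn0 ha0.ne' hε1.ne]
    simp [exists_radius_iff_of_roots hρ₁ hρ₂ hρ₃ hP hQ, and_or_left, exists_or]
  have h₁₂ : ρ₁ ^ n < ρ₂ ^ n := pow_lt_pow_left₀ hρ₁₂ hρ₁.le hn0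
  have h₁ : 0 < ρ₁ ^ n := pow_pos hρ₁ n
  have h₃ : -ρ₃ ^ n < 0 := neg_neg_of_pos (pow_pos hρ₃ n)
  rw [hS, ncard_preimage_pow hn0 _ (by
      simp only [Finset.mem_insert, Finset.mem_singleton, eq_comm (a := (0 : ℂ)), ofReal_eq_zero]
      rintro (h | h | h) <;> linarith),
    card_eq_three.mpr ⟨_, _, _, ofReal_injective.ne h₁₂.ne, ofReal_injective.ne (by linarith),
      ofReal_injective.ne (by linarith), rfl⟩, mul_comm]
end

section
/- Let n ≥ 3 and r ≥ ((n−2)/(n+2))^((n−2)/(2n)). Then the polynomial g(ρ) = (n+2)ρ^n − nρ^(n−2) + 2r^n is nonnegative for all ρ > 0, with equality possible only at ρ = ((n−2)/(n+2))^(1/2); consequently f₋(ρ) = ρ^(n+2) − ρ^n + r^n ρ² − ε r^n is strictly increasing on (0,∞) and has exactly one positive root for any ε > 0. -/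
/-!
Put `c = √((n - 2) / (n + 2))` and `ρ = c s`. Since `(n + 2) c² = n - 2`,
`g(ρ) = c^(n-2) ((n - 2) s^n - n s^(n-2) + 2) + 2 (r^n - c^(n-2))`.
The bracket is positive for `s ≠ 1` by Bernoulli's inequality for `s^(n-2)` with exponent
`n / (n - 2)`, and the hypothesis on `r` says exactly `c^(n-2) ≤ r^n`. As `f₋' (ρ) = ρ g(ρ)`,
`f₋` is strictly increasing on `[0, ∞)`; it is negative at `0` and positive at `1 + ε`.
-/

open Real Set

theorem natCast_mul_pow_sub_two_lt {n : ℕ} (hn : 2 < n) {s : ℝ} (hs : 0 < s) (hs1 : s ≠ 1) :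
    n * s ^ (n - 2) < (n - 2) * s ^ n + 2 := by
  obtain ⟨k, rfl⟩ : ∃ k, n = k + 2 := ⟨n - 2, by omega⟩
  have hk : (0 : ℝ) < k := by exact_mod_cast (show 0 < k by omega)
  simp only [Nat.add_sub_cancel]
  push_cast
  have hx : s ^ k - 1 ≠ 0 :=
    sub_ne_zero.2 ((pow_eq_one_iff_of_nonneg hs.le (by omega)).not.2 hs1)
  have hp : 1 < ((k : ℝ) + 2) / k := by rw [one_lt_div hk]; linarith
  have h := one_add_mul_self_lt_rpow_one_add (by linarith [pow_pos hs k]) hx hp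
  rw [add_sub_cancel, ← rpow_natCast, ← rpow_mul hs.le, mul_div_cancel₀ _ hk.ne'] at h
  norm_cast at h
  rw [div_mul_eq_mul_div, add_div' _ _ _ hk.ne', div_lt_iff₀ hk] at h
  push_cast at h
  linarith

theorem sqrt_pow_le_pow_of_rpow_le {A r : ℝ} (hA : 0 ≤ A) {m n : ℕ} (hn : n ≠ 0)
    (hr : A ^ ((m : ℝ) / (2 * n)) ≤ r) : √A ^ m ≤ r ^ n := by
  have h : (A ^ ((m : ℝ) / (2 * n))) ^ n = √A ^ m := by
    rw [sqrt_eq_rpow, ← rpow_natCast, ← rpow_natCast, ← rpow_mul hA, ← rpow_mul hA]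
    congr 1
    field_simp
  exact h ▸ pow_le_pow_left₀ (rpow_nonneg hA _) hr n

theorem strictMonoOn_of_deriv_pos_of_ne {D : Set ℝ} (hD : Convex ℝ D) {f : ℝ → ℝ}
    (hf : ContinuousOn f D) (c : ℝ) (hf' : ∀ x ∈ interior D, x ≠ c → 0 < deriv f x) :
    StrictMonoOn f D := by
  have avoiding : ∀ a ∈ D, ∀ b ∈ D, a < b → c ∉ Ioo a b → f a < f b := by
    intro a ha b hb hab hc
    have hsub : Icc a b ⊆ D := hD.ordConnected.out ha hb
    refine strictMonoOn_of_deriv_pos (convex_Icc a b) (hf.mono hsub) (fun x hx => ?_)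
      (left_mem_Icc.2 hab.le) (right_mem_Icc.2 hab.le) hab
    refine hf' x (interior_mono hsub hx) ?_
    rintro rfl
    exact hc (by rwa [interior_Icc] at hx)
  intro x hx y hy hxy
  by_cases hc : c ∈ Ioo x y
  · have hcD : c ∈ D := hD.ordConnected.out hx hy (Ioo_subset_Icc_self hc)
    exact (avoiding x hx c hcD hc.1 (by simp)).trans (avoiding c hcD y hy hc.2 (by simp))
  · exact avoiding x hx y hy hxy hc

theorem existsUnique_pos_eq_zero {f : ℝ → ℝ} (hf : ContinuousOn f (Ici 0))
    (hmono : StrictMonoOn f (Ici 0)) (h0 : f 0 < 0) {t : ℝ} (ht : 0 ≤ t) (hft : 0 < f t) :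
    ∃! ρ, 0 < ρ ∧ f ρ = 0 := by
  obtain ⟨ρ, hρ, hfρ⟩ :=
    intermediate_value_Icc ht (hf.mono Icc_subset_Ici_self) ⟨h0.le, hft.le⟩
  have hρ0 : 0 < ρ := hρ.1.lt_of_ne (by rintro rfl; exact h0.ne hfρ)
  refine ⟨ρ, ⟨hρ0, hfρ⟩, fun σ ⟨hσ, hfσ⟩ => ?_⟩
  exact hmono.injOn (mem_Ici.2 hσ.le) (mem_Ici.2 hρ0.le) (hfσ.trans hfρ.symm)

-- The paper's `g` and `f₋`, with `a` standing for `r ^ n` and `b` for `ε * r ^ n`.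
def gPoly (n : ℕ) (a ρ : ℝ) : ℝ := ((n : ℝ) + 2) * ρ ^ n - (n : ℝ) * ρ ^ (n - 2) + 2 * a

def fMinus (n : ℕ) (a b ρ : ℝ) : ℝ := ρ ^ (n + 2) - ρ ^ n + a * ρ ^ 2 - b

section

variable {n : ℕ} {c : ℝ}

theorem gPoly_eq_gPoly_add (a a' ρ : ℝ) : gPoly n a ρ = gPoly n a' ρ + 2 * (a - a') := by
  simp only [gPoly]
  ring

theorem gPoly_eq_mul (hn : 2 ≤ n) (hc : ((n : ℝ) + 2) * c ^ 2 = n - 2) (hc0 : c ≠ 0) (ρ : ℝ) :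
    gPoly n (c ^ (n - 2)) ρ =
      c ^ (n - 2) * ((n - 2) * (ρ / c) ^ n - n * (ρ / c) ^ (n - 2) + 2) := by
  obtain ⟨k, rfl⟩ : ∃ k, n = k + 2 := ⟨n - 2, by omega⟩
  simp only [gPoly, Nat.add_sub_cancel, div_pow] at hc ⊢
  rw [← hc]
  field_simp
  ring

theorem gPoly_pos_of_ne (hn : 2 < n) (hc : ((n : ℝ) + 2) * c ^ 2 = n - 2) (hc0 : 0 < c)
    {a ρ : ℝ} (ha : c ^ (n - 2) ≤ a) (hρ : 0 < ρ) (hρc : ρ ≠ c) : 0 < gPoly n a ρ := by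
  have hs : ρ / c ≠ 1 := fun h => hρc ((div_eq_one_iff_eq hc0.ne').1 h)
  have hbernoulli := natCast_mul_pow_sub_two_lt hn (div_pos hρ hc0) hs
  have hpos : 0 < gPoly n (c ^ (n - 2)) ρ := by
    rw [gPoly_eq_mul hn.le hc hc0.ne']
    exact mul_pos (pow_pos hc0 _) (by linarith)
  rw [gPoly_eq_gPoly_add a (c ^ (n - 2))]
  linarith

theorem gPoly_nonneg (hn : 2 < n) (hc : ((n : ℝ) + 2) * c ^ 2 = n - 2) (hc0 : 0 < c)
    {a ρ : ℝ} (ha : c ^ (n - 2) ≤ a) (hρ : 0 < ρ) : 0 ≤ gPoly n a ρ := by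
  rcases eq_or_ne ρ c with rfl | hρc
  · have hzero : gPoly n (ρ ^ (n - 2)) ρ = 0 := by
      rw [gPoly_eq_mul hn.le hc hc0.ne', div_self hc0.ne']
      simp
    rw [gPoly_eq_gPoly_add a (ρ ^ (n - 2))]
    linarith
  · exact (gPoly_pos_of_ne hn hc hc0 ha hρ hρc).le

theorem hasDerivAt_fMinus (hn : 2 ≤ n) (a b ρ : ℝ) :
    HasDerivAt (fMinus n a b) (ρ * gPoly n a ρ) ρ := by
  obtain ⟨k, rfl⟩ : ∃ k, n = k + 2 := ⟨n - 2, by omega⟩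
  have h := ((((hasDerivAt_pow (k + 2 + 2) ρ).sub (hasDerivAt_pow (k + 2) ρ)).add
    ((hasDerivAt_pow 2 ρ).const_mul a)).sub_const b)
  refine h.congr_deriv ?_
  simp only [gPoly, Nat.add_sub_cancel]
  push_cast
  ring

theorem continuous_fMinus (a b : ℝ) : Continuous (fMinus n a b) := by
  unfold fMinus
  fun_prop

theorem fMinus_pos {a b t : ℝ} (ht : 1 ≤ t) (hb : b < a * t ^ 2) :
    0 < fMinus n a b t := by
  have : t ^ n ≤ t ^ (n + 2) := pow_le_pow_right₀ ht (by omega)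
  simp only [fMinus]
  linarith

theorem strictMonoOn_fMinus (hn : 2 < n) (hc : ((n : ℝ) + 2) * c ^ 2 = n - 2) (hc0 : 0 < c)
    {a : ℝ} (ha : c ^ (n - 2) ≤ a) (b : ℝ) : StrictMonoOn (fMinus n a b) (Ici 0) := by
  refine strictMonoOn_of_deriv_pos_of_ne (convex_Ici 0) (continuous_fMinus a b).continuousOn c
    fun ρ hρ hρc => ?_
  rw [interior_Ici] at hρ
  rw [(hasDerivAt_fMinus hn.le a b ρ).deriv]
  exact mul_pos hρ (gPoly_pos_of_ne hn hc hc0 ha hρ hρc)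

theorem existsUnique_fMinus_eq_zero (hn : 2 < n) (hc : ((n : ℝ) + 2) * c ^ 2 = n - 2)
    (hc0 : 0 < c) {a : ℝ} (ha : c ^ (n - 2) ≤ a) {ε : ℝ} (hε : 0 < ε) :
    ∃! ρ, 0 < ρ ∧ fMinus n a (ε * a) ρ = 0 := by
  have ha0 : 0 < a := (pow_pos hc0 _).trans_le ha
  have hf0 : fMinus n a (ε * a) 0 < 0 := by
    simp [fMinus, zero_pow (show n ≠ 0 by omega), mul_pos hε ha0]
  have hε_lt : ε < (1 + ε) ^ 2 := by nlinarith
  refine existsUnique_pos_eq_zero (continuous_fMinus a _).continuousOn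
    (strictMonoOn_fMinus hn hc hc0 ha _) hf0 (t := 1 + ε) (by positivity)
    (fMinus_pos (by linarith) ?_)
  linarith [mul_lt_mul_of_pos_left hε_lt ha0]

end

theorem stmt_14_general (n : ℕ) (hn : 3 ≤ n) (r ε : ℝ) (hε : 0 < ε)
    (hr : r ≥ (((n : ℝ) - 2) / ((n : ℝ) + 2)) ^ ((((n : ℝ) - 2)) / (2 * (n : ℝ)))) :
    (∀ ρ : ℝ, 0 < ρ →
      0 ≤ ((n : ℝ) + 2) * ρ ^ n - (n : ℝ) * ρ ^ (n - 2) + 2 * r ^ n) ∧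
    (∀ ρ : ℝ, 0 < ρ →
      ((n : ℝ) + 2) * ρ ^ n - (n : ℝ) * ρ ^ (n - 2) + 2 * r ^ n = 0 →
        ρ = Real.sqrt (((n : ℝ) - 2) / ((n : ℝ) + 2))) ∧
    StrictMonoOn (fun ρ : ℝ => ρ ^ (n + 2) - ρ ^ n + r ^ n * ρ ^ 2 - ε * r ^ n)
      (Set.Ioi (0 : ℝ)) ∧
    (∃! ρ : ℝ, 0 < ρ ∧ ρ ^ (n + 2) - ρ ^ n + r ^ n * ρ ^ 2 - ε * r ^ n = 0) := by
  have hn2 : 2 < n := hn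
  have hn_sub : ((n - 2 : ℕ) : ℝ) = n - 2 := by rw [Nat.cast_sub hn2.le, Nat.cast_ofNat]
  have hA : 0 < ((n : ℝ) - 2) / ((n : ℝ) + 2) := by
    rw [← hn_sub]
    exact div_pos (by exact_mod_cast (by omega : 0 < n - 2)) (by positivity)
  set c := √(((n : ℝ) - 2) / ((n : ℝ) + 2))
  have hc0 : 0 < c := sqrt_pos.2 hA
  have hc : ((n : ℝ) + 2) * c ^ 2 = n - 2 := by
    rw [sq_sqrt hA.le]
    field_simp
  have ha : c ^ (n - 2) ≤ r ^ n := sqrt_pow_le_pow_of_rpow_le hA.le (by omega) (by rwa [hn_sub])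
  exact ⟨fun ρ hρ => gPoly_nonneg hn2 hc hc0 ha hρ,
    fun ρ hρ hg => by_contra fun hρc => (gPoly_pos_of_ne hn2 hc hc0 ha hρ hρc).ne' hg,
    (strictMonoOn_fMinus hn2 hc hc0 ha _).mono Ioi_subset_Ici_self,
    existsUnique_fMinus_eq_zero hn2 hc hc0 ha hε⟩

/-- For `n ≥ 3` and `r ≥ ((n−2)/(n+2))^((n−2)/(2n))`, the polynomial
`g(ρ) = (n+2)ρ^n − nρ^(n−2) + 2r^n` is nonnegative for `ρ > 0`, vanishing at most
at `ρ = ((n−2)/(n+2))^(1/2)`; consequently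
`f₋(ρ) = ρ^(n+2) − ρ^n + r^n ρ² − ε r^n` is strictly increasing on `(0,∞)` and has
exactly one positive root for any `ε > 0`. -/
theorem stmt_14 (n : ℕ) (hn : 3 ≤ n) (r ε : ℝ) (hr0 : 0 < r) (hε : 0 < ε)
    (hr : r ≥ (((n : ℝ) - 2) / ((n : ℝ) + 2)) ^ ((((n : ℝ) - 2)) / (2 * (n : ℝ)))) :
    (∀ ρ : ℝ, 0 < ρ →
      0 ≤ ((n : ℝ) + 2) * ρ ^ n - (n : ℝ) * ρ ^ (n - 2) + 2 * r ^ n) ∧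
    (∀ ρ : ℝ, 0 < ρ →
      ((n : ℝ) + 2) * ρ ^ n - (n : ℝ) * ρ ^ (n - 2) + 2 * r ^ n = 0 →
        ρ = Real.sqrt (((n : ℝ) - 2) / ((n : ℝ) + 2))) ∧
    StrictMonoOn (fun ρ : ℝ => ρ ^ (n + 2) - ρ ^ n + r ^ n * ρ ^ 2 - ε * r ^ n)
      (Set.Ioi (0 : ℝ)) ∧
    (∃! ρ : ℝ, 0 < ρ ∧ ρ ^ (n + 2) - ρ ^ n + r ^ n * ρ ^ 2 - ε * r ^ n = 0) :=
  stmt_14_general n hn r ε hε hr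
end
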